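/- Fix μ ∈ ℝ and let m(σ) = (σ/√(2π)) · exp(−μ²/(2σ²)) + μ · (1 − Φ(−μ/σ)) for σ > 0 be the expected ReLU activation E[max(Y,0)] of a Gaussian Y ~ N(μ, σ²) as a function of σ. Then the squared mean activation m(σ)² is differentiable at every σ > 0 with derivative 2 · m(σ) · (1/√(2π)) · exp(−μ²/(2σ²)). -/

import Mathlib

open MeasureTheory ProbabilityTheory Real

/-- The cumulative distribution function of the standard normal distribution. -/
noncomputable def stdGaussianCDF (x : ℝ) : ℝ :=
  (gaussianReal 0 1 (Set.Iic x)).toReal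

/-! With `φ` the standard normal density, `m(σ) = σ φ(μ/σ) + μ Φ(μ/σ)`. Differentiating in `σ`,
the Gaussian factor of the first summand contributes `(μ²/σ²) φ(μ/σ)`, which cancels the
contribution `-(μ²/σ²) φ(μ/σ)` of the CDF term since `Φ' = φ`; hence `m'(σ) = φ(μ/σ)`, and the
chain rule gives the derivative of `m²`. -/

theorem hasDerivAt_setIntegral_Iic {f : ℝ → ℝ} (hf : Continuous f) (hfi : Integrable f) (x : ℝ) :
    HasDerivAt (fun y => ∫ t in Set.Iic y, f t) (f x) x := by
  have hsplit : ∀ y, ∫ t in Set.Iic y, f t = (∫ t in Set.Iic 0, f t) + ∫ t in (0 : ℝ)..y, f t :=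
    fun y => by
      rw [← intervalIntegral.integral_Iic_sub_Iic hfi.integrableOn hfi.integrableOn]; ring
  exact ((hf.integral_hasStrictDerivAt 0 x).hasDerivAt.const_add _).congr_of_eventuallyEq
    (.of_forall hsplit)

theorem stdGaussianCDF_eq_setIntegral (x : ℝ) :
    stdGaussianCDF x = ∫ t in Set.Iic x, gaussianPDFReal 0 1 t := by
  rw [stdGaussianCDF, gaussianReal_apply_eq_integral 0 one_ne_zero, ENNReal.toReal_ofReal]
  exact setIntegral_nonneg measurableSet_Iic fun t _ => gaussianPDFReal_nonneg 0 1 t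

theorem hasDerivAt_stdGaussianCDF (x : ℝ) :
    HasDerivAt stdGaussianCDF (gaussianPDFReal 0 1 x) x := by
  rw [show stdGaussianCDF = _ from funext stdGaussianCDF_eq_setIntegral]
  exact hasDerivAt_setIntegral_Iic (by unfold gaussianPDFReal; fun_prop)
    (integrable_gaussianPDFReal 0 1) x

theorem gaussianPDFReal_zero_one_neg_div (μ σ : ℝ) :
    gaussianPDFReal 0 1 (-(μ / σ)) = 1 / √(2 * π) * exp (-(μ ^ 2) / (2 * σ ^ 2)) := by
  rw [gaussianPDFReal, NNReal.coe_one, mul_one, mul_one, sub_zero, neg_sq, div_pow, one_div]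
  congr 2
  ring

noncomputable def gaussianReluMean (μ s : ℝ) : ℝ :=
  s / √(2 * π) * exp (-(μ ^ 2) / (2 * s ^ 2)) + μ * (1 - stdGaussianCDF (-(μ / s)))

theorem hasDerivAt_gaussianReluMean (μ : ℝ) {σ : ℝ} (hσ : σ ≠ 0) :
    HasDerivAt (gaussianReluMean μ) (1 / √(2 * π) * exp (-(μ ^ 2) / (2 * σ ^ 2))) σ := by
  have hexponent : HasDerivAt (fun s => -(μ ^ 2) / (2 * s ^ 2)) (μ ^ 2 / σ ^ 3) σ := by
    have h := ((hasDerivAt_pow 2 σ).const_mul 2).inv (by positivity) |>.const_mul (-(μ ^ 2))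
    simp only [div_eq_mul_inv (-(μ ^ 2))]
    exact h.congr_deriv (by field_simp; ring)
  have hratio : HasDerivAt (fun s => -(μ / s)) (μ / σ ^ 2) σ := by
    simp only [div_eq_mul_inv μ]
    exact ((hasDerivAt_inv hσ).const_mul μ).neg.congr_deriv (by field_simp)
  have hdensity : HasDerivAt (fun s => s / √(2 * π) * exp (-(μ ^ 2) / (2 * s ^ 2)))
      (1 / √(2 * π) * exp (-(μ ^ 2) / (2 * σ ^ 2))
        + σ / √(2 * π) * (exp (-(μ ^ 2) / (2 * σ ^ 2)) * (μ ^ 2 / σ ^ 3))) σ :=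
    ((hasDerivAt_id σ).div_const _).mul hexponent.exp
  have htail : HasDerivAt (fun s => μ * (1 - stdGaussianCDF (-(μ / s))))
      (μ * -(gaussianPDFReal 0 1 (-(μ / σ)) * (μ / σ ^ 2))) σ :=
    (((hasDerivAt_stdGaussianCDF _).comp σ hratio).const_sub 1).const_mul μ
  refine (hdensity.add htail).congr_deriv ?_
  rw [gaussianPDFReal_zero_one_neg_div]
  field_simp
  ring

/-- For fixed `μ`, with
`m(σ) = (σ/√(2π)) exp(−μ²/(2σ²)) + μ (1 − Φ(−μ/σ))`, the squared mean
activation `m(σ)²` is differentiable at every `σ > 0` with derivative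
`2 m(σ) (1/√(2π)) exp(−μ²/(2σ²))`. -/
theorem hasDerivAt_sq_expected_relu_stddev (μ : ℝ) (σ : ℝ) (hσ : 0 < σ) :
    HasDerivAt (fun s : ℝ =>
        (s / Real.sqrt (2 * π) * Real.exp (-(μ ^ 2) / (2 * s ^ 2))
          + μ * (1 - stdGaussianCDF (-(μ / s)))) ^ 2)
      (2 * (σ / Real.sqrt (2 * π) * Real.exp (-(μ ^ 2) / (2 * σ ^ 2))
          + μ * (1 - stdGaussianCDF (-(μ / σ))))
        * (1 / Real.sqrt (2 * π) * Real.exp (-(μ ^ 2) / (2 * σ ^ 2)))) σ := by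
  refine ((hasDerivAt_gaussianReluMean μ hσ.ne').pow 2).congr_deriv ?_
  simp only [gaussianReluMean]
  ring
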